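/- arXiv:1610.03740 — 3 statements merged into one kernel-verified Lean document; each statement's English description precedes it below -/
import Mathlib

section
/- Let b ∈ ℤ_p and n ∈ ℕ with base-p expansions b = b₀ + b₁p + b₂p² + … and n = n₀ + n₁p + … + n_s p^s (all digits in {0,…,p-1}). Then the binomial coefficient C(b,n) is congruent to the product ∏_{i=0}^{s} C(b_i, n_i) modulo p. -/
/-!
Truncating the digit expansion of `b` after `L > n` digits gives a natural number `m` with
`p ^ L ∣ b - m`. As `n! * C(x, n)` is a polynomial in `x` with integer coefficients and
`v_p(n!) ≤ n < L`, this forces `C(b, n) ≡ C(m, n) (mod p)`. For `C(m, n)` the classical Lucas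
congruence `C(a, k) ≡ C(a % p, k % p) * C(a / p, k / p)` is iterated over the digits.
-/

open Finset

/-- The generalized binomial coefficient `C(b,n) = b(b-1)⋯(b-n+1)/n!`, computed in `ℚ_[p]`
for a `p`-adic integer `b`. -/
noncomputable def padicChoose (p : ℕ) [Fact p.Prime] (b : ℤ_[p]) (n : ℕ) : ℚ_[p] :=
  (∏ k ∈ Finset.range n, ((b : ℚ_[p]) - (k : ℚ_[p]))) / (n.factorial : ℚ_[p])

open Polynomial

theorem Ring.factorial_mul_choose_eq_descPochhammer_eval {R : Type*} [CommRing R]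
    [BinomialRing R] (r : R) (n : ℕ) :
    (n.factorial : R) * Ring.choose r n = (descPochhammer R n).eval r := by
  rw [← nsmul_eq_mul, ← Ring.descPochhammer_eq_factorial_smul_choose, ← aeval_eq_smeval,
    aeval_def, ← eval_map, descPochhammer_map]

theorem Nat.sum_range_succ_mul_pow (p : ℕ) (f : ℕ → ℕ) (L : ℕ) :
    ∑ i ∈ range (L + 1), f i * p ^ i = f 0 + p * ∑ i ∈ range L, f (i + 1) * p ^ i := by
  rw [sum_range_succ', mul_sum, pow_zero, mul_one, add_comm]
  exact congrArg (f 0 + ·) (sum_congr rfl fun i _ => by ring)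

theorem Nat.choose_sum_mul_pow_modEq_prod_choose {p : ℕ} [Fact p.Prime] {f g : ℕ → ℕ}
    (hf : ∀ i, f i < p) (hg : ∀ i, g i < p) {K L : ℕ} (hKL : K ≤ L) :
    (∑ i ∈ range L, f i * p ^ i).choose (∑ i ∈ range K, g i * p ^ i)
      ≡ ∏ i ∈ range K, (f i).choose (g i) [MOD p] := by
  induction K generalizing f g L with
  | zero => simpa using Nat.ModEq.refl 1
  | succ K ih =>
    obtain ⟨L, rfl⟩ : ∃ L', L = L' + 1 := ⟨L - 1, by omega⟩
    have hp : 0 < p := (Fact.out : p.Prime).pos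
    have hmod (h : ℕ → ℕ) (hh : ∀ i, h i < p) (M : ℕ) :
        (h 0 + p * M) % p = h 0 ∧ (h 0 + p * M) / p = M :=
      ⟨by rw [Nat.add_mul_mod_self_left, Nat.mod_eq_of_lt (hh 0)],
        by rw [Nat.add_mul_div_left _ _ hp, Nat.div_eq_of_lt (hh 0), zero_add]⟩
    rw [sum_range_succ_mul_pow, sum_range_succ_mul_pow, prod_range_succ',
      mul_comm _ ((f 0).choose (g 0))]
    refine Choose.choose_modEq_choose_mod_mul_choose_div_nat.trans ?_
    rw [(hmod f hf _).1, (hmod g hg _).1, (hmod f hf _).2, (hmod g hg _).2]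
    exact (ih (fun i => hf (i + 1)) (fun i => hg (i + 1)) (by omega)).mul_left _

namespace PadicInt

variable {p : ℕ} [Fact p.Prime]

theorem summable_mul_pow (d : ℕ → ℤ_[p]) : Summable fun i => d i * (p : ℤ_[p]) ^ i := by
  have hp : (1 : ℝ) < p := by exact_mod_cast (Fact.out : p.Prime).one_lt
  refine Summable.of_norm_bounded
    (summable_geometric_of_lt_one (by positivity) (inv_lt_one_of_one_lt₀ hp)) fun i => ?_
  rw [norm_mul, norm_pow, norm_p]
  exact mul_le_of_le_one_left (by positivity) (norm_le_one _)

theorem pow_dvd_tsum_mul_pow_sub_sum (d : ℕ → ℤ_[p]) (L : ℕ) :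
    (p : ℤ_[p]) ^ L ∣ ∑' i, d i * (p : ℤ_[p]) ^ i - ∑ i ∈ range L, d i * (p : ℤ_[p]) ^ i := by
  refine ⟨∑' i, d (i + L) * (p : ℤ_[p]) ^ i, ?_⟩
  rw [← (summable_mul_pow d).sum_add_tsum_nat_add L, add_sub_cancel_left,
    ← (summable_mul_pow fun i => d (i + L)).tsum_mul_left]
  exact tsum_congr fun i => by ring

theorem dvd_of_pow_dvd_natCast_mul {a L : ℕ} {x : ℤ_[p]} (ha : a ≠ 0)
    (hL : padicValNat p a < L) (h : (p : ℤ_[p]) ^ L ∣ a * x) : (p : ℤ_[p]) ∣ x := by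
  rcases eq_or_ne x 0 with rfl | hx
  · exact dvd_zero _
  have ha' : (a : ℤ_[p]) ≠ 0 := Nat.cast_ne_zero.2 ha
  have hva : (a : ℤ_[p]).valuation = padicValNat p a := by
    rw [← Nat.cast_inj (R := ℤ), ← valuation_coe, coe_natCast, Padic.valuation_natCast]
  rw [← Ideal.mem_span_singleton, mem_span_pow_iff_le_valuation _ (mul_ne_zero ha' hx),
    valuation_mul ha' hx, hva] at h
  rw [← pow_one (p : ℤ_[p]), ← Ideal.mem_span_singleton, mem_span_pow_iff_le_valuation _ hx]
  omega

theorem dvd_choose_sub_choose {x y : ℤ_[p]} {n L : ℕ} (hn : n < L)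
    (h : (p : ℤ_[p]) ^ L ∣ x - y) : (p : ℤ_[p]) ∣ Ring.choose x n - Ring.choose y n := by
  refine dvd_of_pow_dvd_natCast_mul n.factorial_ne_zero
    ((padicValNat_factorial_le p n).trans_lt hn) ?_
  rw [mul_sub, Ring.factorial_mul_choose_eq_descPochhammer_eval,
    Ring.factorial_mul_choose_eq_descPochhammer_eval]
  exact h.trans (sub_dvd_eval_sub x y _)

theorem norm_le_inv_of_dvd {x : ℤ_[p]} (h : (p : ℤ_[p]) ∣ x) : ‖x‖ ≤ (p : ℝ)⁻¹ := by
  simpa using (norm_le_pow_iff_mem_span_pow x 1).2 (Ideal.mem_span_singleton.2 (by simpa using h))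

end PadicInt

theorem padicChoose_eq_choose (p : ℕ) [Fact p.Prime] (b : ℤ_[p]) (n : ℕ) :
    padicChoose p b n = ((Ring.choose b n : ℤ_[p]) : ℚ_[p]) := by
  have hfact : (n.factorial : ℚ_[p]) ≠ 0 := Nat.cast_ne_zero.2 n.factorial_ne_zero
  have h := congrArg PadicInt.Coe.ringHom
    ((Ring.factorial_mul_choose_eq_descPochhammer_eval b n).trans
      (descPochhammer_eval_eq_prod_range n b))
  simp only [map_mul, map_prod, map_sub, map_natCast] at h
  rw [padicChoose, div_eq_iff hfact, mul_comm]
  exact h.symm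

/-- **Lucas' theorem for `p`-adic integers.**  If `b ∈ ℤ_p` has base-`p` digits `bdig 0, bdig 1, …`
and `n ∈ ℕ` has base-`p` digits `ndig 0, …, ndig s`, then
`C(b,n) ≡ ∏_{i=0}^{s} C(bdig i, ndig i) (mod p)`. -/
theorem stmt_0 (p : ℕ) [Fact p.Prime] (b : ℤ_[p]) (n s : ℕ)
    (bdig : ℕ → ℕ) (hbdig : ∀ i, bdig i < p)
    (hb : b = ∑' i : ℕ, (bdig i : ℤ_[p]) * (p : ℤ_[p]) ^ i)
    (ndig : ℕ → ℕ) (hndig : ∀ i, ndig i < p)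
    (hn : n = ∑ i ∈ Finset.range (s + 1), ndig i * p ^ i) :
    ‖padicChoose p b n -
      ((∏ i ∈ Finset.range (s + 1), Nat.choose (bdig i) (ndig i) : ℕ) : ℚ_[p])‖
      ≤ ((p : ℝ))⁻¹ := by
  -- `n < L` beats `v_p(n!)`, and `s + 1 ≤ L` leaves room for all digits of `n`.
  set L := n + s + 1
  set m := ∑ i ∈ range L, bdig i * p ^ i
  have hbm : (p : ℤ_[p]) ^ L ∣ b - m := by
    simpa [m, hb] using PadicInt.pow_dvd_tsum_mul_pow_sub_sum (fun i => (bdig i : ℤ_[p])) L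
  have hchoose : (p : ℤ_[p]) ∣ Ring.choose b n - m.choose n := by
    rw [← Ring.choose_natCast]
    exact PadicInt.dvd_choose_sub_choose (by omega) hbm
  have hlucas : m.choose n ≡ ∏ i ∈ range (s + 1), (bdig i).choose (ndig i) [MOD p] :=
    hn ▸ Nat.choose_sum_mul_pow_modEq_prod_choose hbdig hndig (by omega)
  have hdigits : (p : ℤ_[p]) ∣
      (m.choose n : ℤ_[p]) - ∏ i ∈ range (s + 1), (bdig i).choose (ndig i) := by
    simpa using Int.cast_dvd_cast (α := ℤ_[p]) _ _ hlucas.symm.dvd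
  rw [padicChoose_eq_choose, ← PadicInt.coe_natCast, ← PadicInt.coe_sub,
    PadicInt.padic_norm_e_of_padicInt]
  apply PadicInt.norm_le_inv_of_dvd
  simpa only [sub_add_sub_cancel] using dvd_add hchoose hdigits
end

section
/- Let b ∈ ℤ_p be nonzero. Then the least natural number n ≥ 1 such that v_p(C(b,n)) = 0 is exactly p^{v_p(b)}. -/
open Finset

/-!
If `‖b‖ = p^{-m}` and `0 < k < p^m`, then `p^m ∤ k`, so `‖k‖ > ‖b‖` and the ultrametric
inequality gives `‖b - k‖ = ‖k‖`. Hence for `1 ≤ n ≤ p^m` the numerator `b(b-1)⋯(b-n+1)` has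
norm `‖b‖ · ‖(n-1)!‖`, and `‖C(b,n)‖ = ‖b‖ / ‖n‖ = p^{-m} / ‖n‖`. This equals `1` exactly
when `‖n‖ = p^{-m}`, i.e. `p^m ∣ n`, and the least such `n ≥ 1` is `p^m`.
-/

namespace Padic

variable {p : ℕ} [Fact p.Prime]

theorem pow_neg_lt_norm_natCast {m k : ℕ} (hk₀ : 0 < k) (hk : k < p ^ m) :
    (p : ℝ) ^ (-(m : ℤ)) < ‖(k : ℚ_[p])‖ := by
  rw [← not_le, ← Int.cast_natCast, norm_int_le_pow_iff_dvd, ← Nat.cast_pow,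
    Int.natCast_dvd_natCast]
  exact fun h => hk.not_ge (Nat.le_of_dvd hk₀ h)

theorem norm_sub_natCast_eq {x : ℚ_[p]} {m k : ℕ} (hx : ‖x‖ ≤ (p : ℝ) ^ (-(m : ℤ)))
    (hk₀ : 0 < k) (hk : k < p ^ m) : ‖x - k‖ = ‖(k : ℚ_[p])‖ := by
  have hlt : ‖x‖ < ‖(k : ℚ_[p])‖ := hx.trans_lt (pow_neg_lt_norm_natCast hk₀ hk)
  rw [sub_eq_add_neg,
    IsUltrametricDist.norm_add_eq_max_of_norm_ne_norm (by rw [norm_neg]; exact hlt.ne),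
    norm_neg, max_eq_right hlt.le]

theorem norm_prod_range_succ_sub_natCast {x : ℚ_[p]} {m n : ℕ}
    (hx : ‖x‖ ≤ (p : ℝ) ^ (-(m : ℤ))) (hn : n < p ^ m) :
    ‖∏ k ∈ range (n + 1), (x - k)‖ = ‖x‖ * ‖(n.factorial : ℚ_[p])‖ := by
  have hfactors : ∀ k ∈ range n, ‖x - ((k + 1 : ℕ) : ℚ_[p])‖ = ‖((k + 1 : ℕ) : ℚ_[p])‖ :=
    fun k hk => norm_sub_natCast_eq hx k.succ_pos (by rw [mem_range] at hk; omega)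
  rw [prod_range_succ', Nat.cast_zero, sub_zero, norm_mul, mul_comm, norm_prod,
    prod_congr rfl hfactors, ← norm_prod, ← Nat.cast_prod, prod_range_add_one_eq_factorial]

end Padic

theorem norm_padicChoose_eq_div {p : ℕ} [Fact p.Prime] {b : ℤ_[p]} {m n : ℕ}
    (hb : ‖(b : ℚ_[p])‖ ≤ (p : ℝ) ^ (-(m : ℤ))) (hn₀ : 0 < n) (hn : n ≤ p ^ m) :
    ‖padicChoose p b n‖ = ‖(b : ℚ_[p])‖ / ‖(n : ℚ_[p])‖ := by
  obtain ⟨n, rfl⟩ : ∃ k, n = k + 1 := ⟨n - 1, by omega⟩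
  have hfact : ‖(n.factorial : ℚ_[p])‖ ≠ 0 := by simp [n.factorial_ne_zero]
  rw [padicChoose, norm_div, Padic.norm_prod_range_succ_sub_natCast hb (by omega),
    Nat.factorial_succ, Nat.cast_mul, norm_mul, mul_div_mul_right _ _ hfact]

theorem stmt_2_general (p : ℕ) [Fact p.Prime] (b : ℤ_[p]) (m : ℕ)
    (hm : ‖(b : ℚ_[p])‖ = (p : ℝ) ^ (-(m : ℤ))) :
    IsLeast {n : ℕ | 1 ≤ n ∧ ‖padicChoose p b n‖ = 1} (p ^ m) := by
  have hp : 0 < p := (Fact.out : p.Prime).pos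
  have hpow : 0 < p ^ m := pow_pos hp m
  have hnorm : ∀ n, 0 < n → n ≤ p ^ m →
      ‖padicChoose p b n‖ = (p : ℝ) ^ (-(m : ℤ)) / ‖(n : ℚ_[p])‖ := fun n hn₀ hn => by
    rw [norm_padicChoose_eq_div hm.le hn₀ hn, hm]
  refine ⟨⟨hpow, ?_⟩, fun n ⟨hn₀, hn⟩ => ?_⟩
  · rw [hnorm _ hpow le_rfl, Nat.cast_pow, Padic.norm_p_pow,
      div_self (zpow_pos (by exact_mod_cast hp) _).ne']
  · by_contra! hlt
    have hn_ne : ‖(n : ℚ_[p])‖ ≠ 0 := norm_ne_zero_iff.mpr (Nat.cast_ne_zero.mpr (by omega))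
    rw [hnorm n hn₀ hlt.le, div_eq_one_iff_eq hn_ne] at hn
    exact hn.not_lt (Padic.pow_neg_lt_norm_natCast hn₀ hlt)

/-- For nonzero `b ∈ ℤ_p` with `v_p(b) = m`, the least `n ≥ 1` such that `v_p(C(b,n)) = 0`
is exactly `p ^ m`. -/
theorem stmt_2 (p : ℕ) [Fact p.Prime] (b : ℤ_[p]) (hb : b ≠ 0) (m : ℕ)
    (hm : ‖(b : ℚ_[p])‖ = (p : ℝ) ^ (-(m : ℤ))) :
    IsLeast {n : ℕ | 1 ≤ n ∧ ‖padicChoose p b n‖ = 1} (p ^ m) :=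
  stmt_2_general p b m hm
end

section
/- Let G be a group carrying a p-valuation α, and let N be a normal subgroup of G such that G/N is torsion-free and x^p ∈ N implies x ∈ N. Suppose β : G → ℝ ∪ {∞} factors as β = β̄ ∘ q where q : G → G/N is the quotient map and β̄ is a p-valuation on G/N. Then ω = min{α, β} (pointwise infimum) is a p-valuation on G. -/
open scoped commutatorElement

/-- A `p`-valuation on a group `G`, with values in `ℝ ∪ {∞}` encoded as `EReal`. -/
def IsPValuation (p : ℕ) {G : Type*} [Group G] (ω : G → EReal) : Prop :=
  (∀ x y : G, min (ω x) (ω y) ≤ ω (x * y⁻¹)) ∧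
  (∀ x y : G, ω x + ω y ≤ ω ⁅x, y⁆) ∧
  (∀ x : G, ω x = ⊤ ↔ x = 1) ∧
  (∀ x : G, ((((p : ℝ) - 1)⁻¹ : ℝ) : EReal) < ω x) ∧
  (∀ x : G, ω (x ^ p) = ω x + 1)

/-!
Every axiom of a `p`-valuation survives pulling `β̄` back along the homomorphism `G →* G ⧸ N`,
except the separation axiom `ω x = ⊤ ↔ x = 1`; and every axiom survives taking the pointwise
minimum with `α` (for the `p`-th power axiom because `min (a + 1) (b + 1) = min a b + 1`),
which restores separation because `α` alone already separates.
-/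

namespace IsPValuation

variable {p : ℕ} {G H : Type*} [Group G] [Group H] {α : G → EReal} {β : H → EReal}

theorem min_comp (hα : IsPValuation p α) (hβ : IsPValuation p β) (f : G →* H) :
    IsPValuation p (fun x => min (α x) (β (f x))) := by
  obtain ⟨hα_sub, hα_comm, hα_top, hα_lb, hα_pow⟩ := hα
  obtain ⟨hβ_sub, hβ_comm, hβ_top, hβ_lb, hβ_pow⟩ := hβ
  refine ⟨fun x y => ?_, fun x y => ?_, fun x => ?_, fun x => lt_min (hα_lb x) (hβ_lb _),
    fun x => ?_⟩
  · refine le_min ((min_le_min (min_le_left ..) (min_le_left ..)).trans (hα_sub x y)) ?_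
    rw [map_mul, map_inv]
    exact (min_le_min (min_le_right ..) (min_le_right ..)).trans (hβ_sub _ _)
  · refine le_min ((add_le_add (min_le_left ..) (min_le_left ..)).trans (hα_comm x y)) ?_
    rw [map_commutatorElement]
    exact (add_le_add (min_le_right ..) (min_le_right ..)).trans (hβ_comm _ _)
  · rw [min_eq_top, hα_top]
    refine ⟨And.left, ?_⟩
    rintro rfl
    exact ⟨rfl, (hβ_top _).mpr (map_one f)⟩
  · simp only [map_pow, hα_pow, hβ_pow, min_add_add_right]

end IsPValuation

theorem stmt_6_general (p : ℕ) (G : Type*) [Group G]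
    (α : G → EReal) (hα : IsPValuation p α)
    (N : Subgroup G) (hN : N.Normal)
    (βbar : G ⧸ N → EReal) (hβ : IsPValuation p βbar) :
    IsPValuation p (fun x : G => min (α x) (βbar (QuotientGroup.mk x))) :=
  hα.min_comp hβ (QuotientGroup.mk' N)

/-- Lifting `p`-valuations: if `α` is a `p`-valuation on `G`, `N` is an isolated normal
subgroup with torsion-free quotient, and `β` factors through a `p`-valuation `β̄` on `G/N`,
then the pointwise minimum `ω = min {α, β}` is a `p`-valuation on `G`. -/
theorem stmt_6 (p : ℕ) [Fact p.Prime] (G : Type*) [Group G]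
    (α : G → EReal) (hα : IsPValuation p α)
    (N : Subgroup G) (hN : N.Normal)
    (htf : ∀ x : G ⧸ N, ∀ n : ℕ, 0 < n → x ^ n = 1 → x = 1)
    (hiso : ∀ x : G, x ^ p ∈ N → x ∈ N)
    (βbar : G ⧸ N → EReal) (hβ : IsPValuation p βbar) :
    IsPValuation p (fun x : G => min (α x) (βbar (QuotientGroup.mk x))) :=
  stmt_6_general p G α hα N hN βbar hβ
end
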